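/- Assume (A1): σ_min(Dh(x)) ≥ σ̲ > 0 on C := {x : ‖h(x)‖ ≤ R}; (A2): M := {x : h(x) = 0} and C are compact; (A3): ‖h(x+v) − h(x) − Dh(x)[v]‖ ≤ C_h‖v‖² on C; and β > max_{x∈C} max{β₁(x), β₂(x), β₃(x)}. Then t̲₁ := inf_{x∈C} t₁(x) > 0, and the following holds: let g̲ := min_{x∈C} g(x), let 0 < ε₁ ≤ R/2 and c₁, τ₁ ∈ (0,1), α₀₁ > 0, and set α̲₁ := min(α₀₁, 2(1−c₁)/L_g). If x₀, x₁, …, x_N ∈ C is a sequence such that for every k < N one has ‖∇g(x_k)‖ > ε₁ and g(x_k) − g(x_{k+1}) ≥ c₁·τ₁·min(α̲₁, t₁(x_k))·‖∇g(x_k)‖², then N ≤ (g(x₀) − g̲) / (c₁·τ₁·min(α̲₁, t̲₁)·ε₁²). -/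

import Mathlib

open scoped RealInnerProductSpace ContDiff

noncomputable section

variable {E : Type*} [NormedAddCommGroup E] [InnerProductSpace ℝ E] [FiniteDimensional ℝ E] {m : ℕ}

/-- The least-squares multipliers `λ(x) = (Dh(x) ∘ Dh(x)*)⁻¹ (Dh(x)[∇f(x)]) = (Dh(x)*)† ∇f(x)`.
(When `Dh(x)` is surjective, `Dh(x) ∘ Dh(x)*` is bijective and `Function.invFun` returns
its genuine inverse applied to `Dh(x)[∇f(x)]`.) -/
def lam (f : E → ℝ) (h : E → EuclideanSpace ℝ (Fin m)) (x : E) : EuclideanSpace ℝ (Fin m) :=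
  Function.invFun
    (fun y => fderiv ℝ h x (ContinuousLinearMap.adjoint (fderiv ℝ h x) y))
    (fderiv ℝ h x (gradient f x))

/-- Fletcher's augmented Lagrangian `g(x) = f(x) − ⟪λ(x), h(x)⟫ + β‖h(x)‖²`. -/
def flal (f : E → ℝ) (h : E → EuclideanSpace ℝ (Fin m)) (β : ℝ) (x : E) : ℝ :=
  f x - ⟪lam f h x, h x⟫ + β * ‖h x‖ ^ 2

/-- The smallest singular value `σ_min(A) = min_{‖y‖=1} ‖A*[y]‖` of a linear map. -/
def sigmaMin (A : E →L[ℝ] EuclideanSpace ℝ (Fin m)) : ℝ :=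
  sInf ((fun y => ‖ContinuousLinearMap.adjoint A y‖) '' {y : EuclideanSpace ℝ (Fin m) | ‖y‖ = 1})

/-- `C_λ(x) = ‖Dλ(x)‖`, the operator norm of the derivative of the multipliers. -/
def Clam (f : E → ℝ) (h : E → EuclideanSpace ℝ (Fin m)) (x : E) : ℝ :=
  ‖fderiv ℝ (lam f h) x‖

/-- `β₁(x) = σ₁(Dh(x))·C_λ(x) / (2σ_min(Dh(x))²)`. -/
def beta1 (f : E → ℝ) (h : E → EuclideanSpace ℝ (Fin m)) (x : E) : ℝ :=
  ‖fderiv ℝ h x‖ * Clam f h x / (2 * sigmaMin (fderiv ℝ h x) ^ 2)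

/-- `β₂(x) = C_λ(x)/σ_min(Dh(x))`. -/
def beta2 (f : E → ℝ) (h : E → EuclideanSpace ℝ (Fin m)) (x : E) : ℝ :=
  Clam f h x / sigmaMin (fderiv ℝ h x)

/-- `β₃(x) = 1/σ_min(Dh(x))`. -/
def beta3 (h : E → EuclideanSpace ℝ (Fin m)) (x : E) : ℝ :=
  1 / sigmaMin (fderiv ℝ h x)


/-! ### Auxiliary lemmas -/

lemma sigmaMin_nonneg (A : E →L[ℝ] EuclideanSpace ℝ (Fin m)) : 0 ≤ sigmaMin A :=
  Real.sInf_nonneg (by rintro x ⟨y, hy, rfl⟩; positivity)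

lemma sigmaMin_mul_norm_le (A : E →L[ℝ] EuclideanSpace ℝ (Fin m)) (y : EuclideanSpace ℝ (Fin m)) :
    sigmaMin A * ‖y‖ ≤ ‖ContinuousLinearMap.adjoint A y‖ := by
  rcases eq_or_ne y 0 with rfl | hy
  · simp [sigmaMin_nonneg A]
  · have hny : (0:ℝ) < ‖y‖ := norm_pos_iff.2 hy
    have h1 : sigmaMin A ≤ ‖ContinuousLinearMap.adjoint A (‖y‖⁻¹ • y)‖ := by
      apply csInf_le
      · exact ⟨0, by rintro x ⟨z, hz, rfl⟩; positivity⟩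
      · exact ⟨_, by simp [norm_smul, hny.ne'], rfl⟩
    rw [map_smul, norm_smul, norm_inv, norm_norm] at h1
    calc sigmaMin A * ‖y‖ ≤ ‖y‖⁻¹ * ‖ContinuousLinearMap.adjoint A y‖ * ‖y‖ := by nlinarith
    _ = ‖ContinuousLinearMap.adjoint A y‖ := by field_simp

lemma norm_adjoint_eq (A : E →L[ℝ] EuclideanSpace ℝ (Fin m)) :
    ‖ContinuousLinearMap.adjoint A‖ = ‖A‖ :=
  LinearIsometryEquiv.norm_map ContinuousLinearMap.adjoint A

lemma sigmaMin_le_norm (hm : 0 < m) (A : E →L[ℝ] EuclideanSpace ℝ (Fin m)) :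
    sigmaMin A ≤ ‖A‖ := by
  have hu : ‖(EuclideanSpace.single (⟨0, hm⟩ : Fin m) (1:ℝ))‖ = 1 := by
    simp [EuclideanSpace.norm_single]
  refine le_trans (csInf_le ⟨0, by rintro x ⟨z, hz, rfl⟩; positivity⟩ ⟨_, hu, rfl⟩) ?_
  have := (ContinuousLinearMap.adjoint A).le_opNorm (EuclideanSpace.single (⟨0, hm⟩ : Fin m) (1:ℝ))
  rw [hu, mul_one, norm_adjoint_eq] at this
  exact this

lemma lipschitzWith_sigmaMin (hm : 0 < m) :
    LipschitzWith 1 (sigmaMin : (E →L[ℝ] EuclideanSpace ℝ (Fin m)) → ℝ) := by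
  have key : ∀ A B : E →L[ℝ] EuclideanSpace ℝ (Fin m), sigmaMin A ≤ sigmaMin B + ‖A - B‖ := by
    intro A B
    have hne : {y : EuclideanSpace ℝ (Fin m) | ‖y‖ = 1}.Nonempty :=
      ⟨EuclideanSpace.single (⟨0, hm⟩ : Fin m) (1:ℝ), by simp [EuclideanSpace.norm_single]⟩
    have : sigmaMin A - ‖A - B‖ ≤ sigmaMin B := by
      apply le_csInf (hne.image _)
      rintro x ⟨y, hy, rfl⟩
      have h1 : sigmaMin A ≤ ‖ContinuousLinearMap.adjoint A y‖ := by
        have := sigmaMin_mul_norm_le A y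
        rwa [hy, mul_one] at this
      have h2 : ‖ContinuousLinearMap.adjoint A y‖ ≤
          ‖ContinuousLinearMap.adjoint B y‖ + ‖A - B‖ := by
        have := norm_sub_norm_le (ContinuousLinearMap.adjoint A y) (ContinuousLinearMap.adjoint B y)
        have h3 : ‖ContinuousLinearMap.adjoint A y - ContinuousLinearMap.adjoint B y‖ ≤ ‖A - B‖ := by
          have : ContinuousLinearMap.adjoint A y - ContinuousLinearMap.adjoint B y =
              (ContinuousLinearMap.adjoint (A - B)) y := by simp [map_sub]
          rw [this]
          calc ‖ContinuousLinearMap.adjoint (A - B) y‖ ≤ ‖ContinuousLinearMap.adjoint (A-B)‖ * ‖y‖ :=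
              ContinuousLinearMap.le_opNorm _ _
          _ = ‖A - B‖ := by rw [norm_adjoint_eq, hy, mul_one]
        linarith
      linarith
    linarith
  apply LipschitzWith.of_dist_le_mul
  intro A B
  rw [NNReal.coe_one, one_mul, Real.dist_eq, abs_le]
  have h1 := key A B; have h2 := key B A
  rw [dist_eq_norm]
  constructor
  · have : ‖B - A‖ = ‖A - B‖ := norm_sub_rev _ _
    linarith [key B A, this ▸ (key B A)]
  · linarith [key A B]

set_option linter.unusedSectionVars false

def TT (A : E →L[ℝ] EuclideanSpace ℝ (Fin m)) :
    EuclideanSpace ℝ (Fin m) →L[ℝ] EuclideanSpace ℝ (Fin m) :=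
  A.comp (ContinuousLinearMap.adjoint A)

lemma TT_apply (A : E →L[ℝ] EuclideanSpace ℝ (Fin m)) (y : EuclideanSpace ℝ (Fin m)) :
    TT A y = A (ContinuousLinearMap.adjoint A y) := rfl

lemma inner_TT (A : E →L[ℝ] EuclideanSpace ℝ (Fin m)) (y : EuclideanSpace ℝ (Fin m)) :
    ⟪TT A y, y⟫ = ‖ContinuousLinearMap.adjoint A y‖ ^ 2 := by
  rw [TT_apply, ← ContinuousLinearMap.adjoint_inner_right]
  exact real_inner_self_eq_norm_sq _

lemma TT_isUnit {A : E →L[ℝ] EuclideanSpace ℝ (Fin m)} (hA : 0 < sigmaMin A) :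
    IsUnit (TT A) := by
  have hinj : Function.Injective (TT A) := by
    intro y z hyz
    have hyz' : TT A (y - z) = 0 := by rw [map_sub, hyz, sub_self]
    have h0 : ‖ContinuousLinearMap.adjoint A (y - z)‖ ^ 2 = 0 := by
      rw [← inner_TT, hyz', inner_zero_left]
    have h1 := sigmaMin_mul_norm_le A (y - z)
    have h2 : ‖ContinuousLinearMap.adjoint A (y - z)‖ = 0 := pow_eq_zero_iff two_ne_zero |>.mp h0
    have h3 : ‖y - z‖ = 0 := by nlinarith [norm_nonneg (y - z)]
    exact sub_eq_zero.mp (norm_eq_zero.mp h3)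
  have hinj' : Function.Injective ((TT A).toLinearMap) := hinj
  have hsurj : Function.Surjective ((TT A).toLinearMap) :=
    (LinearMap.injective_iff_surjective).mp hinj'
  let e : EuclideanSpace ℝ (Fin m) ≃ₗ[ℝ] EuclideanSpace ℝ (Fin m) :=
    LinearEquiv.ofBijective (TT A).toLinearMap ⟨hinj', hsurj⟩
  let ec := e.toContinuousLinearEquiv
  refine ⟨ec.toUnit, ?_⟩
  ext y
  rfl

lemma TT_lam_spec (f : E → ℝ) (h : E → EuclideanSpace ℝ (Fin m)) {x : E}
    (hx : IsUnit (TT (fderiv ℝ h x))) :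
    TT (fderiv ℝ h x) (lam f h x) = fderiv ℝ h x (gradient f x) := by
  obtain ⟨u, hu⟩ := id hx
  have hsurj : ∃ a, (fun y => fderiv ℝ h x (ContinuousLinearMap.adjoint (fderiv ℝ h x) y)) a
      = fderiv ℝ h x (gradient f x) := by
    refine ⟨(u⁻¹).1 (fderiv ℝ h x (gradient f x)), ?_⟩
    show TT (fderiv ℝ h x) ((u⁻¹).1 (fderiv ℝ h x (gradient f x))) = _
    rw [← hu, ← ContinuousLinearMap.mul_apply, Units.mul_inv, ContinuousLinearMap.one_apply]
  exact Function.invFun_eq hsurj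

lemma TT_injective {A : E →L[ℝ] EuclideanSpace ℝ (Fin m)} (hA : IsUnit (TT A)) :
    Function.Injective (TT A) := by
  intro y z hyz
  have h1 : (Ring.inverse (TT A) * TT A) = 1 := Ring.inverse_mul_cancel _ hA
  have h2 : ∀ w, Ring.inverse (TT A) (TT A w) = w := by
    intro w; rw [← ContinuousLinearMap.mul_apply, h1, ContinuousLinearMap.one_apply]
  calc y = Ring.inverse (TT A) (TT A y) := (h2 y).symm
  _ = Ring.inverse (TT A) (TT A z) := by rw [hyz]
  _ = z := h2 z

lemma lam_eq_inverse (f : E → ℝ) (h : E → EuclideanSpace ℝ (Fin m)) {x : E}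
    (hx : IsUnit (TT (fderiv ℝ h x))) :
    lam f h x = Ring.inverse (TT (fderiv ℝ h x)) (fderiv ℝ h x (gradient f x)) := by
  apply TT_injective hx
  rw [TT_lam_spec f h hx, ← ContinuousLinearMap.mul_apply,
    Ring.mul_inverse_cancel _ hx, ContinuousLinearMap.one_apply]

def goodSet (h : E → EuclideanSpace ℝ (Fin m)) : Set E := {x | IsUnit (TT (fderiv ℝ h x))}

variable {f : E → ℝ} {h : E → EuclideanSpace ℝ (Fin m)}

lemma contDiff_Dh (hh : ContDiff ℝ ∞ h) : ContDiff ℝ ∞ (fun x => fderiv ℝ h x) :=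
  hh.fderiv_right (le_of_eq (by rfl))

lemma contDiff_TTDh (hh : ContDiff ℝ ∞ h) : ContDiff ℝ ∞ (fun x => TT (fderiv ℝ h x)) :=
  (contDiff_Dh hh).clm_comp
    (((ContinuousLinearMap.adjoint :
        (E →L[ℝ] EuclideanSpace ℝ (Fin m)) ≃ₗᵢ[ℝ] _).contDiff).comp (contDiff_Dh hh))

lemma isOpen_goodSet (hh : ContDiff ℝ ∞ h) : IsOpen (goodSet h) :=
  Units.isOpen.preimage (contDiff_TTDh hh).continuous

lemma contDiff_gradf (hf : ContDiff ℝ ∞ f) : ContDiff ℝ ∞ (gradient f) := by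
  have : gradient f = fun x => (InnerProductSpace.toDual ℝ E).symm (fderiv ℝ f x) := rfl
  rw [this]
  exact ((InnerProductSpace.toDual ℝ E).symm.contDiff).comp (hf.fderiv_right (le_of_eq (by rfl)))

lemma contDiffOn_lam (hf : ContDiff ℝ ∞ f) (hh : ContDiff ℝ ∞ h) :
    ContDiffOn ℝ ∞ (lam f h) (goodSet h) := by
  intro x hx
  apply ContDiffAt.contDiffWithinAt
  have hev : lam f h =ᶠ[nhds x]
      fun y => Ring.inverse (TT (fderiv ℝ h y)) (fderiv ℝ h y (gradient f y)) := by
    filter_upwards [(isOpen_goodSet hh).mem_nhds hx] with y hy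
    exact lam_eq_inverse f h hy
  apply ContDiffAt.congr_of_eventuallyEq ?_ hev
  have hinv : ContDiffAt ℝ ∞ (fun y => Ring.inverse (TT (fderiv ℝ h y))) x :=
    by have := (contDiffAt_ringInverse ℝ (n := ∞) hx.unit).comp x ((contDiff_TTDh hh).contDiffAt); exact this
  exact hinv.clm_apply (((contDiff_Dh hh).clm_apply (contDiff_gradf hf)).contDiffAt)

lemma one_le_inf : (1 : WithTop ℕ∞) ≤ ∞ := by exact_mod_cast le_top

lemma contDiffOn_flal (hf : ContDiff ℝ ∞ f) (hh : ContDiff ℝ ∞ h) (β : ℝ) :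
    ContDiffOn ℝ ∞ (flal f h β) (goodSet h) := by
  have h1 : ContDiffOn ℝ ∞ (fun y => ⟪lam f h y, h y⟫) (goodSet h) :=
    ContDiffOn.inner ℝ (contDiffOn_lam hf hh) (hh.contDiffOn)
  have h2 : ContDiffOn ℝ ∞ (fun y => β * ‖h y‖ ^ 2) (goodSet h) :=
    ContDiffOn.const_smul β ((hh.contDiffOn).norm_sq ℝ)
  exact (hf.contDiffOn.sub h1).add h2

lemma differentiableAt_lam (hf : ContDiff ℝ ∞ f) (hh : ContDiff ℝ ∞ h) {x : E}
    (hx : x ∈ goodSet h) : DifferentiableAt ℝ (lam f h) x :=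
  ((contDiffOn_lam hf hh).differentiableOn (by simp)).differentiableAt
    ((isOpen_goodSet hh).mem_nhds hx)

lemma fderiv_flal_apply (hf : ContDiff ℝ ∞ f) (hh : ContDiff ℝ ∞ h) (β : ℝ) {x : E}
    (hx : x ∈ goodSet h) (v : E) :
    fderiv ℝ (flal f h β) x v = fderiv ℝ f x v
      - (⟪lam f h x, fderiv ℝ h x v⟫ + ⟪fderiv ℝ (lam f h) x v, h x⟫)
      + β * (2 * ⟪h x, fderiv ℝ h x v⟫) := by
  have hlam : HasFDerivAt (lam f h) (fderiv ℝ (lam f h) x) x :=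
    (differentiableAt_lam hf hh hx).hasFDerivAt
  have hhx : HasFDerivAt h (fderiv ℝ h x) x :=
    (hh.differentiable (by simp) x).hasFDerivAt
  have hfx : HasFDerivAt f (fderiv ℝ f x) x :=
    (hf.differentiable (by simp) x).hasFDerivAt
  have h1 : HasFDerivAt (fun y => ⟪lam f h y, h y⟫)
      ((fderivInnerCLM ℝ (lam f h x, h x)).comp <| (fderiv ℝ (lam f h) x).prod (fderiv ℝ h x)) x :=
    HasFDerivAt.inner ℝ hlam hhx
  have h2 : HasFDerivAt (fun y => ‖h y‖ ^ 2)
      (2 • (innerSL ℝ (h x)).comp (fderiv ℝ h x)) x := hhx.norm_sq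
  have H : HasFDerivAt (flal f h β)
      (fderiv ℝ f x - ((fderivInnerCLM ℝ (lam f h x, h x)).comp <|
        (fderiv ℝ (lam f h) x).prod (fderiv ℝ h x)) +
        β • (2 • (innerSL ℝ (h x)).comp (fderiv ℝ h x))) x :=
    (hfx.sub h1).add (h2.const_smul β)
  rw [H.fderiv]
  simp only [ContinuousLinearMap.add_apply, ContinuousLinearMap.sub_apply,
    ContinuousLinearMap.smul_apply, ContinuousLinearMap.comp_apply,
    ContinuousLinearMap.prod_apply, fderivInnerCLM_apply, innerSL_apply_apply, smul_eq_mul,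
    nsmul_eq_mul, Nat.cast_ofNat]

lemma inner_gradient_eq (g : E → ℝ) (x v : E) : ⟪gradient g x, v⟫ = fderiv ℝ g x v :=
  InnerProductSpace.toDual_symm_apply

lemma inner_TT_symm (A : E →L[ℝ] EuclideanSpace ℝ (Fin m)) (a b : EuclideanSpace ℝ (Fin m)) :
    ⟪TT A a, b⟫ = ⟪a, TT A b⟫ := by
  rw [TT_apply, TT_apply, ← ContinuousLinearMap.adjoint_inner_left,
    ← ContinuousLinearMap.adjoint_inner_right]

/-- The key inequality `⟪h x, Dh(x)[∇g(x)]⟫ ≥ (2βσ_min² − σ₁ C_λ)‖h x‖²`. -/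
lemma key_inner (hf : ContDiff ℝ ∞ f) (hh : ContDiff ℝ ∞ h) {β : ℝ} (hβ0 : 0 ≤ β) {x : E}
    (hx : x ∈ goodSet h) :
    ⟪h x, fderiv ℝ h x (gradient (flal f h β) x)⟫ ≥
      (2 * β * sigmaMin (fderiv ℝ h x) ^ 2 - ‖fderiv ℝ h x‖ * Clam f h x) * ‖h x‖ ^ 2 := by
  set A := fderiv ℝ h x with hA
  set v := ContinuousLinearMap.adjoint A (h x) with hv
  have e1 : ⟪h x, A (gradient (flal f h β) x)⟫ = fderiv ℝ (flal f h β) x v := by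
    rw [← ContinuousLinearMap.adjoint_inner_left, real_inner_comm, inner_gradient_eq]
  have e2 : fderiv ℝ f x v = ⟪lam f h x, TT A (h x)⟫ := by
    calc fderiv ℝ f x v = ⟪gradient f x, v⟫ := (inner_gradient_eq f x v).symm
    _ = ⟪A (gradient f x), h x⟫ := by rw [hv, ContinuousLinearMap.adjoint_inner_right]
    _ = ⟪TT A (lam f h x), h x⟫ := by rw [TT_lam_spec f h hx]
    _ = ⟪lam f h x, TT A (h x)⟫ := inner_TT_symm A _ _
  have e3 : ⟪h x, TT A (h x)⟫ = ‖v‖ ^ 2 := by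
    rw [real_inner_comm]
    rw [inner_TT A (h x), ← hv]
  rw [e1, fderiv_flal_apply hf hh β hx v,
    show A v = TT A (h x) from rfl, e2]
  have e4 : ‖fderiv ℝ (lam f h) x v‖ ≤ Clam f h x * (‖A‖ * ‖h x‖) := by
    calc ‖fderiv ℝ (lam f h) x v‖ ≤ Clam f h x * ‖v‖ :=
      (fderiv ℝ (lam f h) x).le_opNorm v
    _ ≤ Clam f h x * (‖A‖ * ‖h x‖) := by
      apply mul_le_mul_of_nonneg_left ?_ (norm_nonneg _)
      rw [hv]
      calc ‖ContinuousLinearMap.adjoint A (h x)‖ ≤ ‖ContinuousLinearMap.adjoint A‖ * ‖h x‖ :=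
        (ContinuousLinearMap.adjoint A).le_opNorm _
      _ = ‖A‖ * ‖h x‖ := by rw [norm_adjoint_eq]
  have e5 : ⟪fderiv ℝ (lam f h) x v, h x⟫ ≤ Clam f h x * (‖A‖ * ‖h x‖) * ‖h x‖ := by
    calc ⟪fderiv ℝ (lam f h) x v, h x⟫ ≤ ‖fderiv ℝ (lam f h) x v‖ * ‖h x‖ :=
      real_inner_le_norm _ _
    _ ≤ Clam f h x * (‖A‖ * ‖h x‖) * ‖h x‖ :=
      mul_le_mul_of_nonneg_right e4 (norm_nonneg _)
  have e6 : sigmaMin A * ‖h x‖ ≤ ‖v‖ := sigmaMin_mul_norm_le A (h x)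
  have e7 : (sigmaMin A * ‖h x‖) ^ 2 ≤ ‖v‖ ^ 2 :=
    pow_le_pow_left₀ (mul_nonneg (sigmaMin_nonneg A) (norm_nonneg _)) e6 2
  have e8 : 2 * β * (sigmaMin A * ‖h x‖) ^ 2 ≤ 2 * β * ‖v‖ ^ 2 :=
    mul_le_mul_of_nonneg_left e7 (by linarith)
  rw [e3]
  nlinarith [e5, e8]

lemma contDiffOn_grad_flal (hf : ContDiff ℝ ∞ f) (hh : ContDiff ℝ ∞ h) (β : ℝ) :
    ContDiffOn ℝ ∞ (gradient (flal f h β)) (goodSet h) := by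
  have h1 : ContDiffOn ℝ ∞ (fun y => fderiv ℝ (flal f h β) y) (goodSet h) :=
    (contDiffOn_flal hf hh β).fderiv_of_isOpen (isOpen_goodSet hh) (le_of_eq (by rfl))
  have h2 : gradient (flal f h β) =
      fun y => (InnerProductSpace.toDual ℝ E).symm (fderiv ℝ (flal f h β) y) := rfl
  rw [h2]
  exact (InnerProductSpace.toDual ℝ E).symm.contDiff.comp_contDiffOn h1

lemma continuousOn_fderiv_grad_flal (hf : ContDiff ℝ ∞ f) (hh : ContDiff ℝ ∞ h) (β : ℝ) :
    ContinuousOn (fun y => fderiv ℝ (gradient (flal f h β)) y) (goodSet h) :=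
  (contDiffOn_grad_flal hf hh β).continuousOn_fderiv_of_isOpen (isOpen_goodSet hh) one_le_inf

lemma continuousOn_grad_flal (hf : ContDiff ℝ ∞ f) (hh : ContDiff ℝ ∞ h) (β : ℝ) :
    ContinuousOn (gradient (flal f h β)) (goodSet h) :=
  (contDiffOn_grad_flal hf hh β).continuousOn

lemma continuousOn_Clam (hf : ContDiff ℝ ∞ f) (hh : ContDiff ℝ ∞ h) :
    ContinuousOn (Clam f h) (goodSet h) :=
  ((contDiffOn_lam hf hh).continuousOn_fderiv_of_isOpen (isOpen_goodSet hh) one_le_inf).norm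

lemma mem_goodSet {x : E} (hx : 0 < sigmaMin (fderiv ℝ h x)) : x ∈ goodSet h :=
  TT_isUnit hx

lemma fderiv_normsq_apply (hh : ContDiff ℝ ∞ h) (x v : E) :
    fderiv ℝ (fun y => ‖h y‖ ^ 2) x v = 2 * ⟪h x, fderiv ℝ h x v⟫ := by
  have hhx : HasFDerivAt h (fderiv ℝ h x) x := (hh.differentiable (by simp) x).hasFDerivAt
  rw [hhx.norm_sq.fderiv]
  simp [ContinuousLinearMap.smul_apply, nsmul_eq_mul, Nat.cast_ofNat]

lemma norm_le_of_sq_le_sq {a b : ℝ} (ha : 0 ≤ a) (hb : 0 ≤ b) (hab : a ^ 2 ≤ b ^ 2) :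
    a ≤ b := by nlinarith

/-! ### end aux -/

open Classical in
/-- The step-size bound `t₁(x)` of Proposition 3.2 (gradient steps stay in `C`); when
`∇g(x) = 0` the first two entries of the minimum are `+∞`, so only the third remains. -/
def t1 (f : E → ℝ) (h : E → EuclideanSpace ℝ (Fin m)) (β R Ch : ℝ) (x : E) : ℝ :=
  if gradient (flal f h β) x = 0 then 1 / (2 * β * ‖fderiv ℝ h x‖ ^ 2)
  else
    min (Real.sqrt (R / (2 * Ch)) / ‖gradient (flal f h β) x‖)
      (min ((2 * β * sigmaMin (fderiv ℝ h x) ^ 2 - ‖fderiv ℝ h x‖ * Clam f h x) * R /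
          (2 * Ch * ‖gradient (flal f h β) x‖ ^ 2))
        (1 / (2 * β * ‖fderiv ℝ h x‖ ^ 2)))

/-- The step-size bound `t₂(x)` of Proposition 3.4 (eigensteps stay in `C`). -/
def t2 (h : E → EuclideanSpace ℝ (Fin m)) (R Ch : ℝ) (x : E) : ℝ :=
  (-‖fderiv ℝ h x‖ + Real.sqrt (‖fderiv ℝ h x‖ ^ 2 + 2 * Ch * R)) / (2 * Ch)

/-- `L_g = max_{y ∈ C} ‖∇²g(y)‖`. -/
def Lg (f : E → ℝ) (h : E → EuclideanSpace ℝ (Fin m)) (β R : ℝ) : ℝ :=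
  sSup ((fun y => ‖fderiv ℝ (gradient (flal f h β)) y‖) '' {y : E | ‖h y‖ ≤ R})

/-- `M_g = max_{y ∈ C} ‖∇³g(y)‖`. -/
def Mg (f : E → ℝ) (h : E → EuclideanSpace ℝ (Fin m)) (β R : ℝ) : ℝ :=
  sSup ((fun y => ‖iteratedFDeriv ℝ 3 (flal f h β) y‖) '' {y : E | ‖h y‖ ≤ R})

/-- `t̲₁ = inf_{x ∈ C} t₁(x)`. -/
def tlow1 (f : E → ℝ) (h : E → EuclideanSpace ℝ (Fin m)) (β R Ch : ℝ) : ℝ :=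
  sInf (t1 f h β R Ch '' {y : E | ‖h y‖ ≤ R})

/-- `t̲₂ = inf_{x ∈ C} t₂(x)`. -/
def tlow2 (h : E → EuclideanSpace ℝ (Fin m)) (R Ch : ℝ) : ℝ :=
  sInf (t2 h R Ch '' {y : E | ‖h y‖ ≤ R})

/-- `g̲ = min_{x ∈ C} g(x)`. -/
def glow (f : E → ℝ) (h : E → EuclideanSpace ℝ (Fin m)) (β R : ℝ) : ℝ :=
  sInf (flal f h β '' {y : E | ‖h y‖ ≤ R})

set_option maxHeartbeats 2000000 in
/-- Under the standing assumptions the Hessian of `g` cannot vanish identically on `C`,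
so `L_g > 0`. -/
lemma Lg_pos (hf : ContDiff ℝ ∞ f) (hh : ContDiff ℝ ∞ h) {β R σl : ℝ}
    (hR : 0 < R) (hσ : 0 < σl)
    (hA1 : ∀ y : E, ‖h y‖ ≤ R → sigmaMin (fderiv ℝ h y) ≥ σl)
    (hA2C : IsCompact {y : E | ‖h y‖ ≤ R})
    (hβ : ∀ y : E, ‖h y‖ ≤ R → β > max (beta1 f h y) (max (beta2 f h y) (beta3 h y)))
    {x₀ : E} (hx₀ : ‖h x₀‖ ≤ R) :
    0 < Lg f h β R := by
  -- basic facts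
  have hCsub : ∀ {y : E}, ‖h y‖ ≤ R → y ∈ goodSet h := fun {y} hy =>
    mem_goodSet (lt_of_lt_of_le hσ (hA1 y hy))
  have hβpos : 0 < β := by
    have h1 := hβ x₀ hx₀
    have h2 : 0 < beta3 h x₀ := by
      have := lt_of_lt_of_le hσ (hA1 x₀ hx₀)
      unfold beta3; positivity
    have h3 : beta3 h x₀ ≤ max (beta1 f h x₀) (max (beta2 f h x₀) (beta3 h x₀)) :=
      le_max_of_le_right (le_max_right _ _)
    linarith
  have hq : ∀ y : E, ‖h y‖ ≤ R →
      ‖fderiv ℝ h y‖ * Clam f h y < 2 * β * sigmaMin (fderiv ℝ h y) ^ 2 := by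
    intro y hy
    have hσy := lt_of_lt_of_le hσ (hA1 y hy)
    have h1 : beta1 f h y < β :=
      lt_of_le_of_lt (le_max_left _ _) (hβ y hy)
    unfold beta1 at h1
    have h2 : (0:ℝ) < 2 * sigmaMin (fderiv ℝ h y) ^ 2 := by positivity
    rw [div_lt_iff₀ h2] at h1
    nlinarith
  -- m ≥ 1
  rcases Nat.eq_zero_or_pos m with hm0 | hm
  · exfalso
    have h1 := hA1 x₀ hx₀
    have h2 : {y : EuclideanSpace ℝ (Fin m) | ‖y‖ = 1} = ∅ := by
      subst hm0
      ext y
      simp only [Set.mem_setOf_eq, Set.mem_empty_iff_false, iff_false]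
      have : y = 0 := Subsingleton.elim y 0
      rw [this]; simp
    unfold sigmaMin at h1
    rw [h2, Set.image_empty, Real.sInf_empty] at h1
    linarith
  -- suppose Lg ≤ 0
  by_contra hL
  push_neg at hL
  have hbdd : BddAbove ((fun y => ‖fderiv ℝ (gradient (flal f h β)) y‖) ''
      {y : E | ‖h y‖ ≤ R}) := by
    apply (hA2C.image_of_continuousOn ?_).bddAbove
    exact ((continuousOn_fderiv_grad_flal hf hh β).mono (fun y hy => hCsub hy)).norm
  have hz : ∀ y : E, ‖h y‖ ≤ R → fderiv ℝ (gradient (flal f h β)) y = 0 := by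
    intro y hy
    have h1 : ‖fderiv ℝ (gradient (flal f h β)) y‖ ≤ Lg f h β R :=
      le_csSup hbdd ⟨y, hy, rfl⟩
    have h2 : ‖fderiv ℝ (gradient (flal f h β)) y‖ ≤ 0 := le_trans h1 hL
    exact norm_eq_zero.mp (le_antisymm h2 (norm_nonneg _))
  -- global minimizer of ‖h‖² is a zero of h
  set φ : E → ℝ := fun y => ‖h y‖ ^ 2 with hφ
  have hφcont : Continuous φ := (hh.continuous.norm).pow 2
  obtain ⟨xs, hxsC, hxsmin⟩ :=
    hA2C.exists_isMinOn ⟨x₀, hx₀⟩ hφcont.continuousOn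
  have hglobal : ∀ y : E, φ xs ≤ φ y := by
    intro y
    by_cases hy : ‖h y‖ ≤ R
    · exact hxsmin hy
    · push_neg at hy
      have h1 : φ xs ≤ R ^ 2 := by
        have : ‖h xs‖ ≤ R := hxsC
        simpa [hφ] using pow_le_pow_left₀ (norm_nonneg _) this 2
      have h2 : R ^ 2 < φ y := by
        simpa [hφ] using pow_lt_pow_left₀ hy hR.le two_ne_zero
      linarith
  have hlocmin : IsLocalMin φ xs := Filter.Eventually.of_forall hglobal
  have hdz : fderiv ℝ φ xs = 0 := hlocmin.fderiv_eq_zero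
  have hxs0 : h xs = 0 := by
    set A := fderiv ℝ h xs with hA
    have h1 : fderiv ℝ φ xs (ContinuousLinearMap.adjoint A (h xs)) = 0 := by rw [hdz]; rfl
    rw [hφ, fderiv_normsq_apply hh] at h1
    have h2 : ⟪h xs, fderiv ℝ h xs (ContinuousLinearMap.adjoint A (h xs))⟫
        = ‖ContinuousLinearMap.adjoint A (h xs)‖ ^ 2 := by
      rw [show fderiv ℝ h xs (ContinuousLinearMap.adjoint A (h xs)) = TT A (h xs) from rfl,
        real_inner_comm, inner_TT A (h xs)]
    rw [h2] at h1
    have h3 : ‖ContinuousLinearMap.adjoint A (h xs)‖ = 0 := by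
      have := sq_nonneg ‖ContinuousLinearMap.adjoint A (h xs)‖
      nlinarith
    have h4 := sigmaMin_mul_norm_le A (h xs)
    have h5 := lt_of_lt_of_le hσ (hA1 xs hxsC)
    rw [h3] at h4
    have h6 : ‖h xs‖ ≤ 0 := by nlinarith
    exact norm_eq_zero.mp (le_antisymm h6 (norm_nonneg _))
  -- a nearby point with h ≠ 0 and ‖h‖ < R
  have hxsR : ‖h xs‖ < R := by rw [hxs0]; simpa using hR
  obtain ⟨δ, hδpos, hδ⟩ : ∃ δ > 0, Metric.ball xs δ ⊆ {y : E | ‖h y‖ < R} := by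
    have hopen : IsOpen {y : E | ‖h y‖ < R} := isOpen_lt hh.continuous.norm continuous_const
    exact Metric.isOpen_iff.mp hopen xs hxsR
  obtain ⟨x₂, hx₂ball, hx₂ne⟩ : ∃ x₂ ∈ Metric.ball xs δ, h x₂ ≠ 0 := by
    by_contra hcon
    push_neg at hcon
    have hev : h =ᶠ[nhds xs] fun _ => (0 : EuclideanSpace ℝ (Fin m)) := by
      filter_upwards [Metric.ball_mem_nhds xs hδpos] with y hy
      exact hcon y hy
    have hfd0 : fderiv ℝ h xs = 0 := by
      rw [hev.fderiv_eq]; exact fderiv_const_apply 0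
    have h5 := lt_of_lt_of_le hσ (hA1 xs hxsC)
    set y0 : EuclideanSpace ℝ (Fin m) := EuclideanSpace.single (⟨0, hm⟩ : Fin m) (1:ℝ) with hy0
    have hy0n : ‖y0‖ = 1 := by simp [hy0, EuclideanSpace.norm_single]
    have h6 : sigmaMin (fderiv ℝ h xs) ≤ 0 := by
      rw [hfd0]
      calc sigmaMin (0 : E →L[ℝ] EuclideanSpace ℝ (Fin m)) ≤
          ‖ContinuousLinearMap.adjoint (0 : E →L[ℝ] EuclideanSpace ℝ (Fin m)) y0‖ :=
        csInf_le ⟨0, by rintro r ⟨z, hz, rfl⟩; positivity⟩ ⟨y0, hy0n, rfl⟩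
      _ = 0 := by simp
    linarith
  have hx₂R : ‖h x₂‖ < R := hδ hx₂ball
  set c : E := gradient (flal f h β) x₂ with hc
  have hKx₂ : 0 < ⟪h x₂, fderiv ℝ h x₂ c⟫ := by
    have h1 := key_inner hf hh hβpos.le (hCsub hx₂R.le)
    have h2 := hq x₂ hx₂R.le
    have h3 : (0:ℝ) < ‖h x₂‖ ^ 2 := pow_pos (norm_pos_iff.mpr hx₂ne) 2
    nlinarith
  have hc0 : c ≠ 0 := by
    intro hceq
    rw [hceq] at hKx₂
    simp at hKx₂
  -- the ray x₂ - t • c stays in C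
  set ℓ : ℝ → E := fun t => x₂ - t • c with hℓ
  set ψ : ℝ → ℝ := fun t => ‖h (ℓ t)‖ ^ 2 with hψ
  have hℓcont : Continuous ℓ := continuous_const.sub (continuous_id.smul continuous_const)
  have hψcont : Continuous ψ := ((hh.continuous.comp hℓcont).norm).pow 2
  have hℓ0 : ℓ 0 = x₂ := by simp [hℓ]
  have hψ0R : ψ 0 < R ^ 2 := by
    show ‖h (ℓ 0)‖ ^ 2 < R ^ 2
    rw [hℓ0]
    exact pow_lt_pow_left₀ hx₂R (norm_nonneg _) two_ne_zero
  have hray : ∀ t : ℝ, 0 ≤ t → ψ t ≤ ψ 0 := by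
    by_contra hcon
    push_neg at hcon
    obtain ⟨t₀, ht₀, hψt₀⟩ := hcon
    set B : Set ℝ := {s | s ∈ Set.Icc 0 t₀ ∧ ψ 0 < ψ s} with hB
    have hBne : B.Nonempty := ⟨t₀, ⟨ht₀, le_rfl⟩, hψt₀⟩
    have hBbdd : BddBelow B := ⟨0, fun b hb => hb.1.1⟩
    set T : ℝ := sInf B with hT
    have hT0 : 0 ≤ T := le_csInf hBne fun b hb => hb.1.1
    have hTt₀ : T ≤ t₀ := csInf_le hBbdd ⟨⟨ht₀, le_rfl⟩, hψt₀⟩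
    have hpre : ∀ s, 0 ≤ s → s < T → ψ s ≤ ψ 0 := by
      intro s hs0 hsT
      by_contra hψs
      push_neg at hψs
      have : s ∈ B := ⟨⟨hs0, le_trans hsT.le hTt₀⟩, hψs⟩
      exact absurd (csInf_le hBbdd this) (not_le.mpr hsT)
    have hψT : ψ T ≤ ψ 0 := by
      rcases eq_or_lt_of_le hT0 with hT0' | hT0'
      · rw [← hT0']
      · have hne : (nhdsWithin T (Set.Ico 0 T)).NeBot := by
          apply mem_closure_iff_nhdsWithin_neBot.mp
          rw [closure_Ico (ne_of_lt hT0')]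
          exact ⟨hT0, le_rfl⟩
        have htend : Filter.Tendsto ψ (nhdsWithin T (Set.Ico 0 T)) (nhds (ψ T)) :=
          hψcont.continuousWithinAt
        apply le_of_tendsto htend
        filter_upwards [self_mem_nhdsWithin] with s hs
        exact hpre s hs.1 hs.2
    -- find ε with ψ < R² on [0, T+ε]
    have hψTR : ψ T < R ^ 2 := lt_of_le_of_lt hψT hψ0R
    have hev : ∀ᶠ s in nhds T, ψ s < R ^ 2 :=
      (hψcont.tendsto T).eventually (eventually_lt_nhds hψTR)
    obtain ⟨δ', hδ'pos, hδ'⟩ := Metric.eventually_nhds_iff.mp hev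
    set ε : ℝ := δ' / 2 with hε
    have hεpos : 0 < ε := by positivity
    have hsmall : ∀ s ∈ Set.Icc 0 (T + ε), ψ s < R ^ 2 := by
      intro s hs
      rcases le_or_gt s T with hsT | hsT
      · rcases eq_or_lt_of_le hsT with rfl | hsT'
        · exact hψTR
        · exact lt_of_le_of_lt (hpre s hs.1 hsT') hψ0R
      · apply hδ'
        rw [Real.dist_eq, abs_lt]
        constructor <;> [linarith [hs.2]; linarith [hs.2]]
    have hmemC : ∀ s ∈ Set.Icc 0 (T + ε), ‖h (ℓ s)‖ ≤ R :=
      fun s hs => (lt_of_pow_lt_pow_left₀ 2 hR.le (hsmall s hs)).le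
    -- the gradient is constant on the segment
    set F : ℝ → E := fun s => gradient (flal f h β) (ℓ s) with hF
    have hℓder : ∀ s : ℝ, HasDerivAt ℓ (-c) s := by
      intro s
      have h1 : HasDerivAt (fun t : ℝ => t • c) ((1:ℝ) • c) s :=
        (hasDerivAt_id s).smul_const c
      rw [one_smul] at h1
      exact h1.const_sub x₂
    have hFder : ∀ s ∈ Set.Icc 0 (T + ε), HasDerivAt F 0 s := by
      intro s hs
      have hdiffg : DifferentiableAt ℝ (gradient (flal f h β)) (ℓ s) :=
        ((contDiffOn_grad_flal hf hh β).differentiableOn (by simp)).differentiableAt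
          ((isOpen_goodSet hh).mem_nhds (hCsub (hmemC s hs)))
      have h1 := hdiffg.hasFDerivAt.comp_hasDerivAt s (hℓder s)
      rw [hz (ℓ s) (hmemC s hs)] at h1
      simp at h1; exact h1
    have hFconst : ∀ s ∈ Set.Icc 0 (T + ε), F s = F 0 :=
      constant_of_has_deriv_right_zero
        (fun s hs => (hFder s hs).continuousAt.continuousWithinAt)
        (fun s hs => (hFder s (Set.Ico_subset_Icc_self hs)).hasDerivWithinAt)
    have hF0 : F 0 = c := by rw [hF]; simp [hℓ0, hc]
    -- ψ is nonincreasing on [0, T+ε]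
    have hψder : ∀ s ∈ Set.Icc 0 (T + ε),
        HasDerivAt ψ (2 * ⟪h (ℓ s), fderiv ℝ h (ℓ s) (-c)⟫) s := by
      intro s hs
      have h1 : HasDerivAt (fun t => h (ℓ t)) (fderiv ℝ h (ℓ s) (-c)) s :=
        (hh.differentiable (by simp) (ℓ s)).hasFDerivAt.comp_hasDerivAt s (hℓder s)
      exact h1.norm_sq
    have hψnonpos : ∀ s ∈ Set.Icc 0 (T + ε), 2 * ⟪h (ℓ s), fderiv ℝ h (ℓ s) (-c)⟫ ≤ 0 := by
      intro s hs
      have hgc : gradient (flal f h β) (ℓ s) = c := by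
        have := hFconst s hs
        rw [hF0] at this
        exact this
      have h1 := key_inner hf hh hβpos.le (hCsub (hmemC s hs))
      rw [hgc] at h1
      have h2 := hq (ℓ s) (hmemC s hs)
      have h3 : (0:ℝ) ≤ ‖h (ℓ s)‖ ^ 2 := sq_nonneg _
      have h4 : 0 ≤ ⟪h (ℓ s), fderiv ℝ h (ℓ s) c⟫ := by nlinarith
      rw [map_neg, inner_neg_right]
      linarith
    have hanti : AntitoneOn ψ (Set.Icc 0 (T + ε)) := by
      apply antitoneOn_of_deriv_nonpos (convex_Icc 0 (T + ε)) hψcont.continuousOn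
      · intro s hs
        rw [interior_Icc] at hs
        exact (hψder s (Set.Ioo_subset_Icc_self hs)).differentiableAt.differentiableWithinAt
      · intro s hs
        rw [interior_Icc] at hs
        rw [(hψder s (Set.Ioo_subset_Icc_self hs)).deriv]
        exact hψnonpos s (Set.Ioo_subset_Icc_self hs)
    obtain ⟨b, hbB, hbT⟩ := exists_lt_of_csInf_lt hBne (lt_add_of_pos_right T hεpos)
    have hbIcc : b ∈ Set.Icc 0 (T + ε) := ⟨hbB.1.1, hbT.le⟩
    have h0Icc : (0:ℝ) ∈ Set.Icc 0 (T + ε) := ⟨le_rfl, by linarith⟩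
    have := hanti h0Icc hbIcc hbB.1.1
    exact absurd hbB.2 (not_lt.mpr this)
  -- unboundedness contradiction
  obtain ⟨ρ, hρ⟩ := hA2C.isBounded.subset_closedBall (0 : E)
  have hρ0 : 0 ≤ ρ := by
    have := hρ hx₀
    have := mem_closedBall_iff_norm.mp this
    have := norm_nonneg (x₀ - 0)
    linarith
  have hcn : 0 < ‖c‖ := norm_pos_iff.mpr hc0
  set t : ℝ := (ρ + ‖x₂‖ + 1) / ‖c‖ with ht
  have htpos : 0 ≤ t := by positivity
  have htc : t * ‖c‖ = ρ + ‖x₂‖ + 1 := by rw [ht, div_mul_cancel₀ _ hcn.ne']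
  have hℓtC : ℓ t ∈ {y : E | ‖h y‖ ≤ R} := by
    have h1 := hray t htpos
    have h2 : ‖h (ℓ t)‖ ≤ ‖h (ℓ 0)‖ :=
      norm_le_of_sq_le_sq (norm_nonneg _) (norm_nonneg _) h1
    rw [hℓ0] at h2
    exact le_trans h2 hx₂R.le
  have h3 := mem_closedBall_iff_norm.mp (hρ hℓtC)
  rw [sub_zero] at h3
  have h4 : t * ‖c‖ - ‖x₂‖ ≤ ‖ℓ t‖ := by
    have : ‖ℓ t‖ = ‖t • c - x₂‖ := by rw [hℓ]; rw [norm_sub_rev]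
    rw [this]
    have := norm_sub_norm_le (t • c) x₂
    rw [norm_smul, Real.norm_eq_abs, abs_of_nonneg htpos] at this
    linarith
  rw [htc] at h4
  linarith


set_option maxHeartbeats 2000000 in
/-- First-order complexity of the Gradient-Eigenstep algorithm (Theorem 3.7, first part):
under (A1), (A2), (A3) and `β` larger than `max{β₁, β₂, β₃}` over `C`, the lower step-size
bound `t̲₁ = inf_C t₁` is positive, and any sequence of gradient steps in `C` whose
iterates all have `‖∇g(x_k)‖ > ε₁` and achieve the backtracking decrease can have at
most `(g(x₀) − g̲) / (c₁ τ₁ min(α̲₁, t̲₁) ε₁²)` steps. -/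
theorem first_order_complexity_of_gradient_eigenstep
    (f : E → ℝ) (h : E → EuclideanSpace ℝ (Fin m))
    (hf : ContDiff ℝ ∞ f) (hh : ContDiff ℝ ∞ h)
    (R σl Ch : ℝ) (hR : 0 < R) (hσ : 0 < σl) (hCh : 0 < Ch)
    (hA1 : ∀ y : E, ‖h y‖ ≤ R → sigmaMin (fderiv ℝ h y) ≥ σl)
    (hA2M : IsCompact {y : E | h y = 0}) (hA2C : IsCompact {y : E | ‖h y‖ ≤ R})
    (hA3 : ∀ y : E, ‖h y‖ ≤ R → ∀ v : E,
      ‖h (y + v) - h y - fderiv ℝ h y v‖ ≤ Ch * ‖v‖ ^ 2)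
    (β : ℝ)
    (hβ : ∀ y : E, ‖h y‖ ≤ R → β > max (beta1 f h y) (max (beta2 f h y) (beta3 h y)))
    (ε₁ : ℝ) (hε₁ : 0 < ε₁) (hε₁R : ε₁ ≤ R / 2)
    (c₁ τ₁ α₀₁ : ℝ) (hc₁ : 0 < c₁ ∧ c₁ < 1) (hτ₁ : 0 < τ₁ ∧ τ₁ < 1) (hα₀₁ : 0 < α₀₁)
    (x : ℕ → E) (N : ℕ)
    (hseqC : ∀ k ≤ N, ‖h (x k)‖ ≤ R)
    (hstep : ∀ k < N,
      ε₁ < ‖gradient (flal f h β) (x k)‖ ∧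
      flal f h β (x k) - flal f h β (x (k + 1)) ≥
        c₁ * τ₁ * min (min α₀₁ (2 * (1 - c₁) / Lg f h β R)) (t1 f h β R Ch (x k)) *
          ‖gradient (flal f h β) (x k)‖ ^ 2) :
    0 < tlow1 f h β R Ch ∧
    (N : ℝ) ≤ (flal f h β (x 0) - glow f h β R) /
      (c₁ * τ₁ * min (min α₀₁ (2 * (1 - c₁) / Lg f h β R)) (tlow1 f h β R Ch) * ε₁ ^ 2) := by
  classical
  -- basic setup
  have hx0C : ‖h (x 0)‖ ≤ R := hseqC 0 (Nat.zero_le N)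
  have hCsub : ∀ {y : E}, ‖h y‖ ≤ R → y ∈ goodSet h := fun {y} hy =>
    mem_goodSet (lt_of_lt_of_le hσ (hA1 y hy))
  have hβpos : 0 < β := by
    have h1 := hβ (x 0) hx0C
    have h2 : 0 < beta3 h (x 0) := by
      have := lt_of_lt_of_le hσ (hA1 (x 0) hx0C)
      unfold beta3; positivity
    have h3 : beta3 h (x 0) ≤ max (beta1 f h (x 0)) (max (beta2 f h (x 0)) (beta3 h (x 0))) :=
      le_max_of_le_right (le_max_right _ _)
    linarith
  have hq : ∀ y : E, ‖h y‖ ≤ R →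
      ‖fderiv ℝ h y‖ * Clam f h y < 2 * β * sigmaMin (fderiv ℝ h y) ^ 2 := by
    intro y hy
    have hσy := lt_of_lt_of_le hσ (hA1 y hy)
    have h1 : beta1 f h y < β := lt_of_le_of_lt (le_max_left _ _) (hβ y hy)
    unfold beta1 at h1
    have h2 : (0:ℝ) < 2 * sigmaMin (fderiv ℝ h y) ^ 2 := by positivity
    rw [div_lt_iff₀ h2] at h1
    nlinarith
  -- m ≥ 1
  have hm : 0 < m := by
    rcases Nat.eq_zero_or_pos m with hm0 | hm
    · exfalso
      have h1 := hA1 (x 0) hx0C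
      have h2 : {y : EuclideanSpace ℝ (Fin m) | ‖y‖ = 1} = ∅ := by
        subst hm0
        ext y
        simp only [Set.mem_setOf_eq, Set.mem_empty_iff_false, iff_false]
        have : y = 0 := Subsingleton.elim y 0
        rw [this]; simp
      unfold sigmaMin at h1
      rw [h2, Set.image_empty, Real.sInf_empty] at h1
      linarith
    · exact hm
  -- uniform bounds on C
  have hσcont : Continuous fun y : E => sigmaMin (fderiv ℝ h y) :=
    (lipschitzWith_sigmaMin hm).continuous.comp (contDiff_Dh hh).continuous
  have hDhcont : Continuous fun y : E => ‖fderiv ℝ h y‖ := (contDiff_Dh hh).continuous.norm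
  set q : E → ℝ := fun y => 2 * β * sigmaMin (fderiv ℝ h y) ^ 2 - ‖fderiv ℝ h y‖ * Clam f h y
    with hqdef
  have hqcont : ContinuousOn q {y : E | ‖h y‖ ≤ R} := by
    apply ContinuousOn.sub
    · exact (continuous_const.mul (hσcont.pow 2)).continuousOn
    · exact ContinuousOn.mul hDhcont.continuousOn
        ((continuousOn_Clam hf hh).mono fun y hy => hCsub hy)
  obtain ⟨xq, hxqC, hxqmin⟩ := hA2C.exists_isMinOn ⟨x 0, hx0C⟩ hqcont
  set κ : ℝ := q xq with hκdef
  have hκpos : 0 < κ := by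
    have := hq xq hxqC
    rw [hκdef, hqdef]
    dsimp only
    linarith
  have hκle : ∀ y : E, ‖h y‖ ≤ R → κ ≤ q y := fun y hy => hxqmin hy
  obtain ⟨xB, hxBC, hxBmax⟩ := hA2C.exists_isMaxOn ⟨x 0, hx0C⟩ hDhcont.continuousOn
  set Bm : ℝ := ‖fderiv ℝ h xB‖ with hBdef
  have hBle : ∀ y : E, ‖h y‖ ≤ R → ‖fderiv ℝ h y‖ ≤ Bm := fun y hy => hxBmax hy
  have hDhlow : ∀ y : E, ‖h y‖ ≤ R → σl ≤ ‖fderiv ℝ h y‖ := fun y hy =>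
    le_trans (le_trans (hA1 y hy) (sigmaMin_le_norm hm (fderiv ℝ h y)))
      le_rfl
  have hBpos : 0 < Bm := lt_of_lt_of_le hσ (le_trans (hDhlow (x 0) hx0C) (hBle (x 0) hx0C))
  have hgcont : ContinuousOn (fun y : E => ‖gradient (flal f h β) y‖) {y : E | ‖h y‖ ≤ R} :=
    ((continuousOn_grad_flal hf hh β).mono fun y hy => hCsub hy).norm
  obtain ⟨xG, hxGC, hxGmax⟩ := hA2C.exists_isMaxOn ⟨x 0, hx0C⟩ hgcont
  set G : ℝ := max ‖gradient (flal f h β) xG‖ 1 with hGdef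
  have hGpos : (0:ℝ) < G := lt_of_lt_of_le one_pos (le_max_right _ _)
  have hGle : ∀ y : E, ‖h y‖ ≤ R → ‖gradient (flal f h β) y‖ ≤ G := fun y hy =>
    le_trans (hxGmax hy) (le_max_left _ _)
  -- a uniform positive lower bound for t1 on C
  set tc : ℝ := min (Real.sqrt (R / (2 * Ch)) / G)
      (min (κ * R / (2 * Ch * G ^ 2)) (1 / (2 * β * Bm ^ 2))) with htcdef
  have htcpos : 0 < tc := by
    apply lt_min
    · apply div_pos _ hGpos
      apply Real.sqrt_pos.mpr
      positivity
    · apply lt_min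
      · apply div_pos (by positivity) (by positivity)
      · positivity
  have ht1low : ∀ y : E, ‖h y‖ ≤ R → tc ≤ t1 f h β R Ch y := by
    intro y hy
    have hDy : 0 < ‖fderiv ℝ h y‖ := lt_of_lt_of_le hσ (hDhlow y hy)
    have hthird : tc ≤ 1 / (2 * β * ‖fderiv ℝ h y‖ ^ 2) := by
      have h1 : 1 / (2 * β * Bm ^ 2) ≤ 1 / (2 * β * ‖fderiv ℝ h y‖ ^ 2) := by
        apply one_div_le_one_div_of_le (by positivity)
        have h2 := pow_le_pow_left₀ (norm_nonneg (fderiv ℝ h y)) (hBle y hy) 2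
        nlinarith [h2, hβpos]
      calc tc ≤ min (κ * R / (2 * Ch * G ^ 2)) (1 / (2 * β * Bm ^ 2)) := min_le_right _ _
      _ ≤ 1 / (2 * β * Bm ^ 2) := min_le_right _ _
      _ ≤ _ := h1
    rw [t1]
    split_ifs with hgrad
    · exact hthird
    · have hgpos : 0 < ‖gradient (flal f h β) y‖ := norm_pos_iff.mpr hgrad
      apply le_min
      · calc tc ≤ Real.sqrt (R / (2 * Ch)) / G := min_le_left _ _
        _ ≤ Real.sqrt (R / (2 * Ch)) / ‖gradient (flal f h β) y‖ :=
          div_le_div_of_nonneg_left (Real.sqrt_nonneg _) hgpos (hGle y hy)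
      · apply le_min _ hthird
        calc tc ≤ min (κ * R / (2 * Ch * G ^ 2)) (1 / (2 * β * Bm ^ 2)) := min_le_right _ _
        _ ≤ κ * R / (2 * Ch * G ^ 2) := min_le_left _ _
        _ ≤ (2 * β * sigmaMin (fderiv ℝ h y) ^ 2 - ‖fderiv ℝ h y‖ * Clam f h y) * R /
            (2 * Ch * ‖gradient (flal f h β) y‖ ^ 2) := by
          have hκy := hκle y hy
          rw [hqdef] at hκy
          dsimp only at hκy
          have hgy2 := pow_le_pow_left₀ (norm_nonneg (gradient (flal f h β) y)) (hGle y hy) 2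
          apply div_le_div₀ (mul_nonneg (by linarith) hR.le)
          · nlinarith [hκy, hR.le]
          · positivity
          · nlinarith [hgy2, hCh]
  have hne : (t1 f h β R Ch '' {y : E | ‖h y‖ ≤ R}).Nonempty :=
    ⟨t1 f h β R Ch (x 0), ⟨x 0, hx0C, rfl⟩⟩
  have hbddb : BddBelow (t1 f h β R Ch '' {y : E | ‖h y‖ ≤ R}) := by
    refine ⟨tc, ?_⟩
    rintro t ⟨z, hz, rfl⟩
    exact ht1low z hz
  have htlow_pos : 0 < tlow1 f h β R Ch := by
    apply lt_of_lt_of_le htcpos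
    apply le_csInf hne
    rintro t ⟨y, hy, rfl⟩
    exact ht1low y hy
  have htlow_le : ∀ y : E, ‖h y‖ ≤ R → tlow1 f h β R Ch ≤ t1 f h β R Ch y := fun y hy =>
    csInf_le hbddb ⟨y, hy, rfl⟩
  refine ⟨htlow_pos, ?_⟩
  -- positivity of L_g and of the denominator
  have hLg : 0 < Lg f h β R := Lg_pos hf hh hR hσ hA1 hA2C hβ hx0C
  set α' : ℝ := min (min α₀₁ (2 * (1 - c₁) / Lg f h β R)) (tlow1 f h β R Ch) with hα'def
  have hα'pos : 0 < α' := by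
    apply lt_min _ htlow_pos
    apply lt_min hα₀₁
    apply div_pos _ hLg
    linarith [hc₁.2]
  set D : ℝ := c₁ * τ₁ * α' * ε₁ ^ 2 with hDdef
  have hDpos : 0 < D := by
    have := hc₁.1; have := hτ₁.1
    positivity
  -- lower bound for g on C
  have hglow : ∀ y : E, ‖h y‖ ≤ R → glow f h β R ≤ flal f h β y := by
    intro y hy
    have hb : BddBelow (flal f h β '' {y : E | ‖h y‖ ≤ R}) :=
      (hA2C.image_of_continuousOn
        ((contDiffOn_flal hf hh β).continuousOn.mono fun z hz => hCsub hz)).bddBelow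
    exact csInf_le hb ⟨y, hy, rfl⟩
  -- per-step decrease
  have hstep' : ∀ k, k < N → D ≤ flal f h β (x k) - flal f h β (x (k + 1)) := by
    intro k hk
    obtain ⟨hg1, hg2⟩ := hstep k hk
    have hxkC : ‖h (x k)‖ ≤ R := hseqC k hk.le
    have hmin_le : α' ≤ min (min α₀₁ (2 * (1 - c₁) / Lg f h β R)) (t1 f h β R Ch (x k)) :=
      min_le_min le_rfl (htlow_le (x k) hxkC)
    have hmin_nonneg : (0:ℝ) ≤ min (min α₀₁ (2 * (1 - c₁) / Lg f h β R)) (t1 f h β R Ch (x k)) :=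
      le_trans hα'pos.le hmin_le
    have hsq : ε₁ ^ 2 ≤ ‖gradient (flal f h β) (x k)‖ ^ 2 :=
      pow_le_pow_left₀ hε₁.le hg1.le 2
    calc D = c₁ * τ₁ * α' * ε₁ ^ 2 := rfl
    _ ≤ c₁ * τ₁ * min (min α₀₁ (2 * (1 - c₁) / Lg f h β R)) (t1 f h β R Ch (x k)) *
        ‖gradient (flal f h β) (x k)‖ ^ 2 := by
      have hcτ : (0:ℝ) ≤ c₁ * τ₁ := mul_nonneg hc₁.1.le hτ₁.1.le
      apply mul_le_mul
      · exact mul_le_mul_of_nonneg_left hmin_le hcτ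
      · exact hsq
      · exact sq_nonneg ε₁
      · exact mul_nonneg hcτ hmin_nonneg
    _ ≤ flal f h β (x k) - flal f h β (x (k + 1)) := hg2
  -- telescoping
  have htel : (N : ℝ) * D ≤ flal f h β (x 0) - flal f h β (x N) := by
    have hsum := Finset.sum_range_sub' (fun k => flal f h β (x k)) N
    have hNsum : (N : ℝ) * D = ∑ _k ∈ Finset.range N, D := by
      rw [Finset.sum_const, Finset.card_range, nsmul_eq_mul]
    calc (N : ℝ) * D = ∑ _k ∈ Finset.range N, D := hNsum
      _ ≤ ∑ k ∈ Finset.range N, (flal f h β (x k) - flal f h β (x (k + 1))) := by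
        apply Finset.sum_le_sum
        intro k hk
        exact hstep' k (Finset.mem_range.mp hk)
      _ = flal f h β (x 0) - flal f h β (x N) := hsum
  have hfinal : (N : ℝ) * D ≤ flal f h β (x 0) - glow f h β R := by
    have := hglow (x N) (hseqC N le_rfl)
    linarith
  rw [le_div_iff₀ hDpos]
  exact hfinal
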